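/- arXiv:2605.07587 — 2 statements merged into one kernel-verified Lean document; each statement's English description precedes it below -/
import Mathlib

section
/- The number of words of length 2n over an alphabet {ω₁,…,ωₙ} in which every letter occurs exactly twice and, in every prefix, each ωᵢ that has appeared has at least as many occurrences as ω_j for all j > i, equals the double factorial (2n-1)!!. -/
open scoped Nat
open Finset

/-- prefix count -/
def cnt {N M : ℕ} (w : Fin N → Fin M) (p : ℕ) (i : Fin M) : ℕ :=
  (univ.filter fun t : Fin N => (t : ℕ) < p ∧ w t = i).card

def Cond (m : ℕ) (w : Fin (2*m) → Fin m) : Prop :=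
  (∀ i, (univ.filter fun t : Fin (2*m) => w t = i).card = 2) ∧
  (∀ p : ℕ, ∀ i j : Fin m, i < j → cnt w p i = 0 ∨ cnt w p j ≤ cnt w p i)

variable {m : ℕ}

def emb (m : ℕ) (a : Fin (2*m+1)) (s : Fin (2*m)) : Fin (2*m+2) :=
  if (s:ℕ) < (a:ℕ) then ⟨s, by have := s.isLt; omega⟩ else ⟨(s:ℕ)+1, by have := s.isLt; omega⟩

lemma emb_val (a : Fin (2*m+1)) (s : Fin (2*m)) :
    ((emb m a s : Fin (2*m+2)) : ℕ) = if (s:ℕ) < (a:ℕ) then (s:ℕ) else (s:ℕ)+1 := by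
  rw [emb]; split <;> rfl

def retr (m : ℕ) (a : Fin (2*m+1)) (t : Fin (2*m+2))
    (h : ¬((t:ℕ) = (a:ℕ) ∨ (t:ℕ) = 2*m+1)) : Fin (2*m) :=
  ⟨if (t:ℕ) < (a:ℕ) then (t:ℕ) else (t:ℕ) - 1, by
    have := t.isLt; have := a.isLt; push_neg at h; split <;> omega⟩

lemma retr_val (a : Fin (2*m+1)) (t : Fin (2*m+2)) (h) :
    ((retr m a t h : Fin (2*m)) : ℕ) = if (t:ℕ) < (a:ℕ) then (t:ℕ) else (t:ℕ) - 1 := rfl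

lemma emb_ne (a : Fin (2*m+1)) (s : Fin (2*m)) :
    ¬(((emb m a s : Fin (2*m+2)):ℕ) = (a:ℕ) ∨ ((emb m a s : Fin (2*m+2)):ℕ) = 2*m+1) := by
  rw [emb_val]; have := s.isLt; have := a.isLt; split <;> omega

lemma emb_retr (a : Fin (2*m+1)) (t : Fin (2*m+2)) (h) :
    emb m a (retr m a t h) = t := by
  apply Fin.ext
  rw [emb_val, retr_val]
  have := t.isLt; have := a.isLt; push_neg at h
  split_ifs <;> omega

lemma retr_emb (a : Fin (2*m+1)) (s : Fin (2*m)) (h) :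
    retr m a (emb m a s) h = s := by
  apply Fin.ext
  rw [retr_val, emb_val]
  have := s.isLt; have := a.isLt
  split_ifs <;> omega

def back (m : ℕ) (a : Fin (2*m+1)) (w' : Fin (2*m) → Fin m) (t : Fin (2*m+2)) : Fin (m+1) :=
  if h : (t:ℕ) = (a:ℕ) ∨ (t:ℕ) = 2*m+1 then Fin.last m
  else (w' (retr m a t h)).castSucc

lemma hfib_back (a : Fin (2*m+1)) (w' : Fin (2*m) → Fin m) (t : Fin (2*m+2)) :
    back m a w' t = Fin.last m ↔ ((t:ℕ) = (a:ℕ) ∨ (t:ℕ) = 2*m+1) := by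
  rw [back]; split
  · simpa
  · simp only [iff_false, *]
    exact (Fin.castSucc_lt_last _).ne

lemma hcompat_back (a : Fin (2*m+1)) (w' : Fin (2*m) → Fin m) (s : Fin (2*m)) :
    back m a w' (emb m a s) = (w' s).castSucc := by
  rw [back, dif_neg (emb_ne a s), retr_emb]
lemma emb_lt_iff (a : Fin (2*m+1)) (s : Fin (2*m)) (p : ℕ) :
    ((emb m a s : Fin (2*m+2)) : ℕ) < p ↔ (s:ℕ) < (if (a:ℕ) < p then p - 1 else p) := by
  rw [emb_val]; have := a.isLt; have := s.isLt; split_ifs <;> omega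

lemma cnt_transfer (a : Fin (2*m+1)) (w : Fin (2*m+2) → Fin (m+1)) (w' : Fin (2*m) → Fin m)
    (hcompat : ∀ s, w (emb m a s) = (w' s).castSucc)
    (hfib : ∀ t, w t = Fin.last m ↔ ((t:ℕ) = (a:ℕ) ∨ (t:ℕ) = 2*m+1))
    (p : ℕ) (i : Fin m) :
    cnt w p i.castSucc = cnt w' (if (a:ℕ) < p then p - 1 else p) i := by
  classical
  unfold cnt
  rw [eq_comm]
  have hne : ∀ t : Fin (2*m+2), w t = i.castSucc →
      ¬((t:ℕ) = (a:ℕ) ∨ (t:ℕ) = 2*m+1) := by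
    intro t ht hor
    have : w t = Fin.last m := (hfib t).mpr hor
    rw [ht] at this
    exact (Fin.castSucc_lt_last i).ne this
  refine Finset.card_bij' (fun s _ => emb m a s)
    (fun t ht => retr m a t (hne t (Finset.mem_filter.mp ht).2.2)) ?_ ?_ ?_ ?_
  · intro s hs
    simp only [mem_filter, mem_univ, true_and] at hs ⊢
    exact ⟨(emb_lt_iff a s p).mpr hs.1, by rw [hcompat, hs.2]⟩
  · intro t ht
    simp only [mem_filter, mem_univ, true_and] at ht ⊢
    constructor
    · have h := hne t ht.2 ; have := (emb_lt_iff a (retr m a t h) p).mp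
      rw [← emb_lt_iff a _ p, emb_retr]
      exact ht.1
    · have h := hne t ht.2
      have h2 := hcompat (retr m a t h)
      rw [emb_retr] at h2
      exact Fin.castSucc_injective m (by rw [← h2, ht.2])
  · intro s _; exact retr_emb a s _
  · intro t ht; exact emb_retr a t _
lemma cnt_of_ge {N M : ℕ} (w : Fin N → Fin M) {p : ℕ} (hp : N ≤ p) (i : Fin M) :
    cnt w p i = (univ.filter fun t => w t = i).card := by
  unfold cnt
  congr 1
  apply Finset.filter_congr
  intro t _
  simp [lt_of_lt_of_le t.isLt hp]

lemma cnt_le_fcnt {N M : ℕ} (w : Fin N → Fin M) (p : ℕ) (i : Fin M) :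
    cnt w p i ≤ (univ.filter fun t => w t = i).card := by
  apply Finset.card_le_card
  intro t ht
  simp only [mem_filter, mem_univ, true_and] at ht ⊢
  exact ht.2
lemma cond_transfer {m : ℕ} (a : Fin (2*m+1)) (w : Fin (2*m+2) → Fin (m+1)) (w' : Fin (2*m) → Fin m)
    (hcompat : ∀ s, w (emb m a s) = (w' s).castSucc)
    (hfib : ∀ t, w t = Fin.last m ↔ ((t:ℕ) = (a:ℕ) ∨ (t:ℕ) = 2*m+1)) :
    Cond (m+1) w ↔ Cond m w' := by
  classical
  have ha := a.isLt
  have hf : ∀ i : Fin m, (univ.filter fun t : Fin (2*m+2) => w t = i.castSucc).card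
      = (univ.filter fun s : Fin (2*m) => w' s = i).card := by
    intro i
    have e := cnt_transfer a w w' hcompat hfib (2*m+2) i
    rw [if_pos (by omega)] at e
    rw [cnt_of_ge w (by omega : 2*m+2 ≤ 2*m+2) i.castSucc] at e
    rw [cnt_of_ge w' (by omega : 2*m ≤ 2*m+2-1) i] at e
    exact e
  have hfl : (univ.filter fun t : Fin (2*m+2) => w t = Fin.last m).card = 2 := by
    have : (univ.filter fun t : Fin (2*m+2) => w t = Fin.last m)
        = {(⟨(a:ℕ), by omega⟩ : Fin (2*m+2)), ⟨2*m+1, by omega⟩} := by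
      ext t
      simp only [mem_filter, mem_univ, true_and, mem_insert, mem_singleton, hfib t]
      simp [Fin.ext_iff]
    rw [this, Finset.card_pair (by simp [Fin.ext_iff]; omega)]
  constructor
  · rintro ⟨h1, h2⟩
    constructor
    · intro i
      rw [← hf i]
      exact h1 i.castSucc
    · intro p i j hij
      have hshift : (if (a:ℕ) < (if p ≤ (a:ℕ) then p else p + 1) then
          (if p ≤ (a:ℕ) then p else p + 1) - 1 else (if p ≤ (a:ℕ) then p else p + 1)) = p := by
        split_ifs <;> omega
      have ei := cnt_transfer a w w' hcompat hfib (if p ≤ (a:ℕ) then p else p + 1) i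
      have ej := cnt_transfer a w w' hcompat hfib (if p ≤ (a:ℕ) then p else p + 1) j
      rw [hshift] at ei ej
      rw [← ei, ← ej]
      exact h2 _ i.castSucc j.castSucc (by simpa using hij)
  · rintro ⟨h1, h2⟩
    refine ⟨?_, ?_⟩
    · show ∀ i : Fin (m+1), (univ.filter fun t : Fin (2*m+2) => w t = i).card = 2
      intro i
      by_cases hi : i = Fin.last m
      · rw [hi]; exact hfl
      · rw [← Fin.castSucc_castPred i hi, hf]
        exact h1 _
    · show ∀ p : ℕ, ∀ i j : Fin (m+1), i < j →
        cnt w p i = 0 ∨ cnt w p j ≤ cnt w p i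
      intro p i j hij
      by_cases hj : j = Fin.last m
      · subst hj
        have hi : i ≠ Fin.last m := hij.ne
        rw [← Fin.castSucc_castPred i hi,
          cnt_transfer a w w' hcompat hfib p (i.castPred hi)]
        rcases le_or_gt p (a:ℕ) with hpa | hap
        · right
          have h0 : cnt w p (Fin.last m) = 0 := by
            unfold cnt
            rw [Finset.card_eq_zero, Finset.filter_eq_empty_iff]
            intro t _
            rw [hfib t]
            push_neg
            omega
          omega
        · rw [if_pos hap]
          rcases le_or_gt p (2*m+1) with hp2 | hp2
          · have hle1 : cnt w p (Fin.last m) ≤ 1 := by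
              unfold cnt
              calc (univ.filter fun t : Fin (2*m+2) => (t:ℕ) < p ∧ w t = Fin.last m).card
                  ≤ ({⟨(a:ℕ), by omega⟩} : Finset (Fin (2*m+2))).card := by
                    apply Finset.card_le_card
                    intro t ht
                    simp only [mem_filter, mem_univ, true_and] at ht
                    rw [hfib t] at ht
                    simp only [mem_singleton, Fin.ext_iff]
                    omega
                _ = 1 := rfl
            rcases Nat.eq_zero_or_pos (cnt w' (p-1) (i.castPred hi)) with h0 | h0
            · left; exact h0
            · right; omega
          · right
            have hsat : cnt w' (p-1) (i.castPred hi) = 2 := by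
              rw [cnt_of_ge w' (by omega)]
              exact h1 _
            have h5 : cnt w p (Fin.last m) ≤ 2 := by
              have := cnt_le_fcnt w p (Fin.last m)
              omega
            omega
      · have hi : i ≠ Fin.last m := (hij.trans_le (Fin.le_last j)).ne
        rw [← Fin.castSucc_castPred i hi, ← Fin.castSucc_castPred j hj,
          cnt_transfer a w w' hcompat hfib p (i.castPred hi),
          cnt_transfer a w w' hcompat hfib p (j.castPred hj)]
        exact h2 _ (i.castPred hi) (j.castPred hj)
          (by simp only [Fin.lt_def, Fin.coe_castPred]; exact hij)
lemma step_count (m : ℕ) :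
    Nat.card {w : Fin (2*(m+1)) → Fin (m+1) // Cond (m+1) w}
      = (2*m+1) * Nat.card {w : Fin (2*m) → Fin m // Cond m w} := by
  classical
  set F : Fin (2*m+1) × {w' : Fin (2*m) → Fin m // Cond m w'} →
      {w : Fin (2*(m+1)) → Fin (m+1) // Cond (m+1) w} :=
    fun x => ⟨back m x.1 x.2.1,
      (cond_transfer x.1 (back m x.1 x.2.1) x.2.1 (hcompat_back x.1 x.2.1)
        (hfib_back x.1 x.2.1)).mpr x.2.2⟩ with hF
  have hbij : Function.Bijective F := by
    constructor
    · rintro ⟨a, w', hw'⟩ ⟨b, v', hv'⟩ h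
      have heq : back m a w' = back m b v' := congrArg Subtype.val h
      have hab : a = b := by
        have h1 : back m a w' ⟨(a:ℕ), by have := a.isLt; omega⟩ = Fin.last m :=
          (hfib_back a w' _).mpr (Or.inl rfl)
        rw [heq] at h1
        have h2 : (a:ℕ) = (b:ℕ) ∨ (a:ℕ) = 2*m+1 := by
          simpa using (hfib_back b v' (⟨(a:ℕ), by have := a.isLt; omega⟩ : Fin (2*m+2))).mp h1
        have := a.isLt
        apply Fin.ext
        omega
      subst hab
      have hwv : w' = v' := by
        funext s
        have := congrFun heq (emb m a s)
        rw [hcompat_back, hcompat_back] at this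
        exact Fin.castSucc_injective m this
      subst hwv
      rfl
    · rintro ⟨w, hw⟩
      have h1 : ∀ i : Fin (m+1), (univ.filter fun t : Fin (2*m+2) => w t = i).card = 2 := hw.1
      have h2 : ∀ p : ℕ, ∀ i j : Fin (m+1), i < j →
          (cnt (N := 2*m+2) w p i = 0 ∨ cnt (N := 2*m+2) w p j ≤ cnt (N := 2*m+2) w p i) := hw.2
      set L : Fin (2*m+2) := ⟨2*m+1, by omega⟩ with hL
      have wL : w L = Fin.last m := by
        by_contra hne
        have hcnt_i : cnt (N := 2*m+2) w (2*m+1) (w L) = 1 := by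
          unfold cnt
          have hset : (univ.filter fun t : Fin (2*m+2) => (t:ℕ) < 2*m+1 ∧ w t = w L)
              = (univ.filter fun t : Fin (2*m+2) => w t = w L).erase L := by
            ext t
            simp only [mem_filter, mem_univ, true_and, mem_erase, ne_eq, Fin.ext_iff, hL]
            have := t.isLt
            constructor
            · rintro ⟨hlt, hwt⟩
              exact ⟨by omega, hwt⟩
            · rintro ⟨hne2, hwt⟩
              exact ⟨by omega, hwt⟩
          rw [hset, Finset.card_erase_of_mem (by simp), h1 (w L)]
        have hcnt_l : cnt (N := 2*m+2) w (2*m+1) (Fin.last m) = 2 := by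
          unfold cnt
          have hfe : (univ.filter fun t : Fin (2*m+2) => (t:ℕ) < 2*m+1 ∧ w t = Fin.last m)
              = univ.filter fun t : Fin (2*m+2) => w t = Fin.last m := by
            apply Finset.filter_congr
            intro t _
            have := t.isLt
            constructor
            · rintro ⟨_, h⟩; exact h
            · intro h
              refine ⟨?_, h⟩
              by_contra h'
              have htL : t = L := Fin.ext (by simp only [hL]; omega)
              rw [htL] at h
              exact hne h
          rw [hfe]
          exact h1 (Fin.last m)
        have := h2 (2*m+1) (w L) (Fin.last m) (lt_of_le_of_ne (Fin.le_last _) hne)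
        omega
      obtain ⟨A, hA, hAL⟩ := Finset.exists_mem_ne
        (s := univ.filter fun t : Fin (2*m+2) => w t = Fin.last m)
        (by rw [h1 (Fin.last m)]; omega) L
      have hAlt : (A:ℕ) < 2*m+1 := by
        have := A.isLt
        have hALv : (A:ℕ) ≠ 2*m+1 := by
          intro hh
          exact hAL (Fin.ext (by simp only [hL]; exact hh))
        omega
      set a : Fin (2*m+1) := ⟨(A:ℕ), hAlt⟩ with haa
      have hwA : w A = Fin.last m := (Finset.mem_filter.mp hA).2
      have hfibw : ∀ t, w t = Fin.last m ↔ ((t:ℕ) = (a:ℕ) ∨ (t:ℕ) = 2*m+1) := by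
        have hsub : ({A, L} : Finset (Fin (2*m+2))) ⊆
            univ.filter fun t : Fin (2*m+2) => w t = Fin.last m := by
          intro t ht
          rcases Finset.mem_insert.mp ht with h | h
          · subst h; simp [hwA]
          · rw [Finset.mem_singleton.mp h]; simp [wL]
        have hS : ({A, L} : Finset (Fin (2*m+2)))
            = univ.filter fun t : Fin (2*m+2) => w t = Fin.last m :=
          Finset.eq_of_subset_of_card_le hsub
            (by rw [h1 (Fin.last m), Finset.card_pair hAL])
        intro t
        constructor
        · intro h
          have : t ∈ ({A, L} : Finset (Fin (2*m+2))) := by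
            rw [hS]; simp [h]
          rcases Finset.mem_insert.mp this with h' | h'
          · left; rw [h']
          · right; rw [Finset.mem_singleton.mp h']
        · intro h
          rcases h with h | h
          · have ht : t = A := Fin.ext h
            rw [ht]; exact hwA
          · have ht : t = L := Fin.ext (by simp only [hL]; exact h)
            rw [ht]; exact wL
      have hne' : ∀ s : Fin (2*m), w (emb m a s) ≠ Fin.last m := by
        intro s h
        exact emb_ne a s ((hfibw _).mp h)
      set w' : Fin (2*m) → Fin m := fun s => (w (emb m a s)).castPred (hne' s) with hw'def
      have hcompat : ∀ s, w (emb m a s) = (w' s).castSucc := by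
        intro s
        rw [hw'def]
        exact (Fin.castSucc_castPred _ _).symm
      have hw' : Cond m w' := (cond_transfer a w w' hcompat hfibw).mp hw
      refine ⟨(a, ⟨w', hw'⟩), Subtype.ext ?_⟩
      show back m a w' = w
      funext t
      rw [back]
      split
      · next h => exact ((hfibw t).mpr h).symm
      · next h =>
        show ((w (emb m a (retr m a t h))).castPred _).castSucc = w t
        rw [Fin.castSucc_castPred, emb_retr]
  have := Nat.card_eq_of_bijective F hbij
  rw [Nat.card_prod, Nat.card_eq_fintype_card (α := Fin (2*m+1)), Fintype.card_fin] at this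
  exact this.symm

lemma key_count : ∀ n : ℕ, Nat.card {w : Fin (2*n) → Fin n // Cond n w} = (2*n-1)‼ := by
  intro n
  induction n with
  | zero =>
    have : Unique {w : Fin (2*0) → Fin 0 // Cond 0 w} :=
      ⟨⟨⟨fun t => t, ⟨fun i => i.elim0, fun p i j _ => i.elim0⟩⟩⟩,
        fun w => Subtype.ext (funext fun t => t.elim0)⟩
    exact Nat.card_unique
  | succ m ih =>
    rw [step_count m, ih]
    have h1 : 2*(m+1)-1 = 2*m+1 := by omega
    rw [h1]
    have h2 : (2*m+1)‼ = (2*m+1) * (2*m-1)‼ := by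
      have := Nat.doubleFactorial_add_one (2*m)
      simpa using this
    rw [h2]

lemma ncard_fin {N : ℕ} (P : Fin N → Prop) [DecidablePred P] :
    Nat.card {t : Fin N // P t} = (univ.filter P).card := by
  rw [Nat.card_eq_fintype_card, Fintype.card_subtype]

/-- The number of words of length `2n` over the alphabet `Fin n` in which every letter
occurs exactly twice and, in every prefix, each letter `i` that has appeared has at least
as many occurrences as any letter `j > i`, equals the double factorial `(2n-1)!!`. -/
theorem stmt_1 (n : ℕ) :
    Nat.card {w : Fin (2 * n) → Fin n //
      (∀ i : Fin n, Nat.card {t : Fin (2 * n) // w t = i} = 2) ∧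
      (∀ p : ℕ, ∀ i j : Fin n, i < j →
        Nat.card {t : Fin (2 * n) // (t : ℕ) < p ∧ w t = i} = 0 ∨
        Nat.card {t : Fin (2 * n) // (t : ℕ) < p ∧ w t = j} ≤
          Nat.card {t : Fin (2 * n) // (t : ℕ) < p ∧ w t = i})} = (2 * n - 1)‼ := by
  classical
  have hcond : ∀ w : Fin (2*n) → Fin n,
      ((∀ i : Fin n, Nat.card {t : Fin (2 * n) // w t = i} = 2) ∧
      (∀ p : ℕ, ∀ i j : Fin n, i < j →
        Nat.card {t : Fin (2 * n) // (t : ℕ) < p ∧ w t = i} = 0 ∨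
        Nat.card {t : Fin (2 * n) // (t : ℕ) < p ∧ w t = j} ≤
          Nat.card {t : Fin (2 * n) // (t : ℕ) < p ∧ w t = i})) ↔ Cond n w := by
    intro w
    unfold Cond cnt
    simp only [ncard_fin]
  exact (Nat.card_congr (Equiv.subtypeEquivRight hcond)).trans (key_count n)
end

section
/- Let E ∈ ℚ[[z]] be the unique power series with E(0) = 0 satisfying E = z(1+E²), and let D = E/z (the Catalan series). Then the series G(z,x) defined coefficientwise by g_{n,m} counting Dyck paths of length 2n whose m-th up-step is distinguished satisfies G(z,1) = E²·(1+E²)²/(1-E²)³ with coefficients [z²]G(z,1) = 1, [z⁴]G(z,1) = 7, [z⁶]G(z,1) = 38. -/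
open PowerSeries Finset
open scoped Classical

/-- `w : Fin m → Bool` (with `true` = up-step, `false` = down-step) is a Dyck path:
every prefix has at least as many up-steps as down-steps, and up-steps and down-steps
are equinumerous. -/
def IsDyck {m : ℕ} (w : Fin m → Bool) : Prop :=
  (∀ p : ℕ, p ≤ m →
    (univ.filter fun t : Fin m => (t : ℕ) < p ∧ w t = false).card ≤
      (univ.filter fun t : Fin m => (t : ℕ) < p ∧ w t = true).card) ∧
  (univ.filter fun t : Fin m => w t = true).card =
    (univ.filter fun t : Fin m => w t = false).card

/-- `gPos n` is the sum, over all Dyck paths of length `2n` and over all up-steps of the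
path, of the (1-based) position of that up-step in the path; equivalently the number of
Dyck paths of length `2n` with a distinguished up-step weighted by its position. -/
noncomputable def gPos (n : ℕ) : ℕ :=
  ∑ w ∈ univ.filter (fun w : Fin (2 * n) → Bool => IsDyck w),
    ∑ t ∈ univ.filter (fun t : Fin (2 * n) => w t = true), ((t : ℕ) + 1)

/-- number of up-steps strictly before position `p` -/
noncomputable def upc {m : ℕ} (w : Fin m → Bool) (p : ℕ) : ℕ :=
  (univ.filter fun t : Fin m => (t : ℕ) < p ∧ w t = true).card

noncomputable def dnc {m : ℕ} (w : Fin m → Bool) (p : ℕ) : ℕ :=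
  (univ.filter fun t : Fin m => (t : ℕ) < p ∧ w t = false).card

/-- nonnegative path from height `a` down to `0` -/
def Ok (a : ℕ) {m : ℕ} (w : Fin m → Bool) : Prop :=
  (∀ p ≤ m, dnc w p ≤ a + upc w p) ∧ a + upc w m = dnc w m

noncomputable def Nd (m a : ℕ) : ℕ :=
  ((univ : Finset (Fin m → Bool)).filter (Ok a)).card

/-- the statistic `Σ_{p=0}^m (h_p + 1)` -/
noncomputable def st (a : ℕ) {m : ℕ} (w : Fin m → Bool) : ℕ :=
  ∑ p ∈ range (m + 1), (a + upc w p + 1 - dnc w p)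

noncomputable def Bd (m a : ℕ) : ℕ :=
  ∑ w ∈ (univ : Finset (Fin m → Bool)).filter (Ok a), st a w

lemma upc_zero {m : ℕ} (w : Fin m → Bool) : upc w 0 = 0 := by
  simp [upc]

lemma dnc_zero {m : ℕ} (w : Fin m → Bool) : dnc w 0 = 0 := by
  simp [dnc]

lemma upc_cons {m : ℕ} (b : Bool) (v : Fin m → Bool) (p : ℕ) :
    upc (Fin.cons b v) (p + 1) = (if b then 1 else 0) + upc v p := by
  unfold upc
  rw [Finset.card_filter, Finset.card_filter, Fin.sum_univ_succ]
  congr 1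
  · simp [Fin.cons]
  · apply Finset.sum_congr rfl
    intro t _
    simp only [Fin.cons_succ, Fin.val_succ]
    congr 1
    simp [Nat.succ_lt_succ_iff]

lemma dnc_cons {m : ℕ} (b : Bool) (v : Fin m → Bool) (p : ℕ) :
    dnc (Fin.cons b v) (p + 1) = (if b then 0 else 1) + dnc v p := by
  unfold dnc
  rw [Finset.card_filter, Finset.card_filter, Fin.sum_univ_succ]
  congr 1
  · cases b <;> simp [Fin.cons]
  · apply Finset.sum_congr rfl
    intro t _
    simp only [Fin.cons_succ, Fin.val_succ]
    congr 1
    simp [Nat.succ_lt_succ_iff]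

lemma ok_cons_true {m : ℕ} (a : ℕ) (v : Fin m → Bool) :
    Ok a (Fin.cons true v) ↔ Ok (a + 1) v := by
  constructor
  · rintro ⟨h1, h2⟩
    refine ⟨fun p hp => ?_, ?_⟩
    · have := h1 (p + 1) (by omega)
      rw [upc_cons, dnc_cons] at this
      simpa [add_comm, add_left_comm] using this
    · have := h2
      rw [upc_cons, dnc_cons] at this
      simp only [if_true] at this
      omega
  · rintro ⟨h1, h2⟩
    refine ⟨fun p hp => ?_, ?_⟩
    · match p, hp with
      | 0, _ => simp [upc_zero, dnc_zero]
      | (q+1), hq =>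
        have := h1 q (by omega)
        rw [upc_cons, dnc_cons]
        simp only [if_true]
        omega
    · rw [upc_cons, dnc_cons]
      simp only [if_true]
      omega

lemma ok_cons_false {m : ℕ} (a : ℕ) (v : Fin m → Bool) :
    Ok (a + 1) (Fin.cons false v) ↔ Ok a v := by
  constructor
  · rintro ⟨h1, h2⟩
    refine ⟨fun p hp => ?_, ?_⟩
    · have := h1 (p + 1) (by omega)
      rw [upc_cons, dnc_cons] at this
      simp only [Bool.false_eq_true, if_false] at this
      omega
    · have := h2
      rw [upc_cons, dnc_cons] at this
      simp only [Bool.false_eq_true, if_false] at this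
      omega
  · rintro ⟨h1, h2⟩
    refine ⟨fun p hp => ?_, ?_⟩
    · match p, hp with
      | 0, _ => simp [upc_zero, dnc_zero]
      | (q+1), hq =>
        have := h1 q (by omega)
        rw [upc_cons, dnc_cons]
        simp only [Bool.false_eq_true, if_false]
        omega
    · rw [upc_cons, dnc_cons]
      simp only [Bool.false_eq_true, if_false]
      omega

lemma not_ok_zero_cons_false {m : ℕ} (v : Fin m → Bool) :
    ¬ Ok 0 (Fin.cons false v) := by
  rintro ⟨h1, _⟩
  have h := h1 1 (by omega)
  have e1 : upc (Fin.cons false v) 1 = 0 := by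
    simpa [upc_zero] using upc_cons false v 0
  have e2 : dnc (Fin.cons false v) 1 = 1 := by
    simpa [dnc_zero] using dnc_cons false v 0
  omega

lemma st_cons_true {m : ℕ} (a : ℕ) (v : Fin m → Bool) :
    st a (Fin.cons true v) = (a + 1) + st (a + 1) v := by
  unfold st
  rw [Finset.sum_range_succ' (fun p => a + upc (Fin.cons true v) p + 1 - dnc (Fin.cons true v) p) (m+1)]
  rw [upc_zero, dnc_zero]
  simp only [Nat.add_zero, Nat.sub_zero]
  rw [add_comm]
  congr 1
  apply Finset.sum_congr rfl
  intro p _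
  rw [upc_cons, dnc_cons]
  simp only [if_true]
  omega

lemma st_cons_false {m : ℕ} (a : ℕ) (v : Fin m → Bool) :
    st (a + 1) (Fin.cons false v) = (a + 2) + st a v := by
  unfold st
  rw [Finset.sum_range_succ' (fun p => a + 1 + upc (Fin.cons false v) p + 1 - dnc (Fin.cons false v) p) (m+1)]
  rw [upc_zero, dnc_zero]
  simp only [Nat.add_zero, Nat.sub_zero]
  rw [add_comm]
  congr 1
  apply Finset.sum_congr rfl
  intro p _
  rw [upc_cons, dnc_cons]
  simp only [Bool.false_eq_true, if_false]
  omega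

lemma sum_cons_split {m : ℕ} {M : Type*} [AddCommMonoid M] (F : (Fin (m+1) → Bool) → M) :
    ∑ w : Fin (m+1) → Bool, F w =
      (∑ v : Fin m → Bool, F (Fin.cons true v)) + (∑ v : Fin m → Bool, F (Fin.cons false v)) := by
  rw [← Equiv.sum_comp (Fin.consEquiv (fun _ => Bool)) F]
  rw [Fintype.sum_prod_type]
  rw [Fintype.sum_bool]
  rfl

lemma upc_nil (w : Fin 0 → Bool) (p : ℕ) : upc w p = 0 := by simp [upc]
lemma dnc_nil (w : Fin 0 → Bool) (p : ℕ) : dnc w p = 0 := by simp [dnc]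

lemma Nd_zero (a : ℕ) : Nd 0 a = if a = 0 then 1 else 0 := by
  unfold Nd
  rcases Nat.eq_zero_or_pos a with h | h
  · subst h
    rw [if_pos rfl]
    rw [Finset.filter_true_of_mem, Finset.card_univ]
    · simp
    · intro w _
      exact ⟨fun p _ => by simp [upc_nil, dnc_nil], by simp [upc_nil, dnc_nil]⟩
  · rw [if_neg (by omega)]
    rw [Finset.card_eq_zero, Finset.filter_eq_empty_iff]
    intro w _
    rintro ⟨-, h2⟩
    rw [upc_nil, dnc_nil] at h2
    omega

lemma st_nil (a : ℕ) (w : Fin 0 → Bool) : st a w = a + 1 := by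
  simp [st, upc_nil, dnc_nil]

lemma Bd_zero (a : ℕ) : Bd 0 a = if a = 0 then 1 else 0 := by
  unfold Bd
  rcases Nat.eq_zero_or_pos a with h | h
  · subst h
    rw [if_pos rfl]
    rw [Finset.filter_true_of_mem, Fintype.sum_unique]
    · simp [st_nil]
    · intro w _
      exact ⟨fun p _ => by simp [upc_nil, dnc_nil], by simp [upc_nil, dnc_nil]⟩
  · rw [if_neg (by omega)]
    apply Finset.sum_eq_zero
    intro w hw
    rw [Finset.mem_filter] at hw
    exfalso
    obtain ⟨-, -, h2⟩ := hw
    rw [upc_nil, dnc_nil] at h2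
    omega

lemma Nd_card_sum (m a : ℕ) :
    Nd m a = ∑ w : Fin m → Bool, if Ok a w then 1 else 0 := by
  rw [Nd, Finset.card_filter]

lemma Nd_succ_succ (m a : ℕ) : Nd (m+1) (a+1) = Nd m (a+2) + Nd m a := by
  rw [Nd_card_sum, Nd_card_sum, Nd_card_sum, sum_cons_split]
  congr 1
  · apply Finset.sum_congr rfl; intro v _
    simp [ok_cons_true, show a + 1 + 1 = a + 2 from rfl]
  · apply Finset.sum_congr rfl; intro v _
    simp [ok_cons_false]

lemma Nd_succ_zero (m : ℕ) : Nd (m+1) 0 = Nd m 1 := by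
  rw [Nd_card_sum, Nd_card_sum, sum_cons_split]
  have h2 : (∑ v : Fin m → Bool, if Ok 0 (Fin.cons false v) then 1 else 0) = 0 := by
    apply Finset.sum_eq_zero
    intro v _
    rw [if_neg (not_ok_zero_cons_false v)]
  rw [h2, add_zero]
  apply Finset.sum_congr rfl; intro v _
  have : Ok 0 (Fin.cons true v) ↔ Ok 1 v := ok_cons_true 0 v
  simp [this]

lemma Bd_filter_sum (m a : ℕ) :
    Bd m a = ∑ w : Fin m → Bool, if Ok a w then st a w else 0 := by
  rw [Bd, Finset.sum_filter]

lemma sum_ite_add {α : Type*} [Fintype α] (P : α → Prop) (c : ℕ) (g : α → ℕ) :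
    (∑ v : α, if P v then c + g v else 0) =
      (∑ v : α, if P v then c else 0) + (∑ v : α, if P v then g v else 0) := by
  rw [← Finset.sum_add_distrib]
  apply Finset.sum_congr rfl
  intro v _
  by_cases h : P v <;> simp [h]

lemma sum_ite_const {α : Type*} [Fintype α] (P : α → Prop) (c : ℕ) :
    (∑ v : α, if P v then c else 0) = (univ.filter P).card * c := by
  rw [← Finset.sum_filter, Finset.sum_const, smul_eq_mul]

lemma Bd_succ_succ (m a : ℕ) :
    Bd (m+1) (a+1) = (a+2) * Nd m (a+2) + Bd m (a+2) + ((a+2) * Nd m a + Bd m a) := by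
  rw [Bd_filter_sum, sum_cons_split]
  congr 1
  · have : ∀ v : Fin m → Bool,
        (if Ok (a+1) (Fin.cons true v) then st (a+1) (Fin.cons true v) else 0) =
        (if Ok (a+2) v then (a+2) + st (a+2) v else 0) := by
      intro v
      have h1 : Ok (a+1) (Fin.cons true v) ↔ Ok (a+2) v := ok_cons_true (a+1) v
      rw [st_cons_true]
      simp [h1, show a + 1 + 1 = a + 2 from rfl]
    rw [Finset.sum_congr rfl (fun v _ => this v), sum_ite_add, sum_ite_const]
    rw [← Nd, ← Bd_filter_sum, Nat.mul_comm]
  · have : ∀ v : Fin m → Bool,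
        (if Ok (a+1) (Fin.cons false v) then st (a+1) (Fin.cons false v) else 0) =
        (if Ok a v then (a+2) + st a v else 0) := by
      intro v
      have h1 : Ok (a+1) (Fin.cons false v) ↔ Ok a v := ok_cons_false a v
      rw [st_cons_false]
      simp [h1]
    rw [Finset.sum_congr rfl (fun v _ => this v), sum_ite_add, sum_ite_const]
    rw [← Nd, ← Bd_filter_sum, Nat.mul_comm]

lemma Bd_succ_zero (m : ℕ) : Bd (m+1) 0 = Nd m 1 + Bd m 1 := by
  rw [Bd_filter_sum, sum_cons_split]
  have h2 : (∑ v : Fin m → Bool, if Ok 0 (Fin.cons false v) then st 0 (Fin.cons false v) else 0) = 0 := by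
    apply Finset.sum_eq_zero
    intro v _
    rw [if_neg (not_ok_zero_cons_false v)]
  rw [h2, add_zero]
  have : ∀ v : Fin m → Bool,
      (if Ok 0 (Fin.cons true v) then st 0 (Fin.cons true v) else 0) =
      (if Ok 1 v then 1 + st 1 v else 0) := by
    intro v
    have h1 : Ok 0 (Fin.cons true v) ↔ Ok 1 v := ok_cons_true 0 v
    rw [st_cons_true]
    simp [h1]
  rw [Finset.sum_congr rfl (fun v _ => this v), sum_ite_add, sum_ite_const]
  rw [← Nd, ← Bd_filter_sum, mul_one]

noncomputable def wq (m a : ℕ) : ℚ :=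
  if (m + a) % 2 = 0 ∧ a ≤ m then ((m.choose ((m - a) / 2) : ℕ) : ℚ) else 0

lemma wP (m a : ℕ) : wq (m+1) (a+1) = wq m a + wq m (a+2) := by
  unfold wq
  by_cases hp : (m + a) % 2 = 0
  · by_cases hm : a ≤ m
    · rw [if_pos ⟨by omega, by omega⟩, if_pos ⟨hp, hm⟩]
      by_cases hm2 : a + 2 ≤ m
      · rw [if_pos ⟨by omega, hm2⟩]
        have hk : (m - a) / 2 = (m - (a+2)) / 2 + 1 := by omega
        have hk2 : (m + 1 - (a+1)) / 2 = (m - (a+2)) / 2 + 1 := by omega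
        rw [hk, hk2, Nat.choose_succ_succ]
        push_cast
        ring
      · have ha : a = m := by omega
        subst ha
        rw [if_neg (by omega)]
        have h1 : (a + 1 - (a + 1)) / 2 = 0 := by omega
        have h2 : (a - a) / 2 = 0 := by omega
        rw [h1, h2]
        simp
    · rw [if_neg (by omega), if_neg (by omega), if_neg (by omega)]
      ring
  · rw [if_neg (by omega), if_neg (by omega), if_neg (by omega)]
    ring

lemma wB (m : ℕ) : wq (m+1) 0 = 2 * wq m 1 := by
  unfold wq
  by_cases hp : (m + 1) % 2 = 0
  · have hm : 1 ≤ m := by omega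
    rw [if_pos ⟨by omega, by omega⟩, if_pos ⟨by omega, hm⟩]
    have hj : (m + 1 - 0) / 2 = (m - 1) / 2 + 1 := by omega
    rw [hj, Nat.choose_succ_succ]
    have hsym : m.choose ((m-1)/2 + 1) = m.choose ((m-1)/2) := by
      have h1 : m - ((m-1)/2 + 1) = (m-1)/2 := by omega
      have := Nat.choose_symm (n := m) (k := (m-1)/2 + 1) (by omega)
      rw [h1] at this
      exact this.symm
    rw [hsym]
    push_cast
    ring
  · rw [if_neg (by omega), if_neg (by omega)]
    ring

noncomputable def Xc : ℕ → ℕ → ℚ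
  | 0, a => if a = 0 then 1 else 0
  | (m+1), 0 => if (m+1) % 2 = 0 then 2^(m+1) else 0
  | (m+1), (a+1) => Xc m a + Xc m (a+2)

lemma Xc_zero_left (m : ℕ) : Xc m 0 = if m % 2 = 0 then (2:ℚ)^m else 0 := by
  cases m with
  | zero => simp [Xc]
  | succ m => rfl

lemma Xc_succ_succ (m a : ℕ) : Xc (m+1) (a+1) = Xc m a + Xc m (a+2) := rfl

lemma X4 (m : ℕ) : Xc (m+2) 0 = 4 * Xc m 0 := by
  rw [Xc_zero_left, Xc_zero_left]
  have : (m+2) % 2 = m % 2 := by omega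
  rw [this]
  by_cases h : m % 2 = 0
  · rw [if_pos h, if_pos h, pow_succ, pow_succ]
    ring
  · rw [if_neg h, if_neg h]
    ring

lemma KIBI (m : ℕ) :
    (∀ b, Xc m b + Xc m (b+4) + wq m (b+4) = 2 * Xc m (b+2) + wq m b) ∧
    (Xc (m+1) 0 + Xc m 3 + wq m 3 = 3 * Xc m 1 + wq m 1) := by
  induction m with
  | zero =>
    constructor
    · intro b
      cases b with
      | zero => simp [Xc, wq]
      | succ b =>
        have h1 : Xc 0 (b+1) = 0 := by simp [Xc]
        have h2 : Xc 0 (b+1+4) = 0 := by simp [Xc]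
        have h3 : Xc 0 (b+1+2) = 0 := by simp [Xc]
        have h4 : wq 0 (b+1+4) = 0 := by unfold wq; rw [if_neg (by omega)]
        have h5 : wq 0 (b+1) = 0 := by unfold wq; rw [if_neg (by omega)]
        rw [h1, h2, h3, h4, h5]; ring
    · have h0 : Xc 1 0 = 0 := by rw [Xc_zero_left]; norm_num
      have h1 : Xc 0 3 = 0 := by simp [Xc]
      have h2 : Xc 0 1 = 0 := by simp [Xc]
      have h3 : wq 0 3 = 0 := by unfold wq; rw [if_neg (by omega)]
      have h4 : wq 0 1 = 0 := by unfold wq; rw [if_neg (by omega)]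
      rw [h0, h1, h2, h3, h4]; ring
  | succ m ih =>
    obtain ⟨ki, bi⟩ := ih
    have ksucc : ∀ b, Xc (m+1) b + Xc (m+1) (b+4) + wq (m+1) (b+4) =
        2 * Xc (m+1) (b+2) + wq (m+1) b := by
      intro b
      cases b with
      | zero =>
        have e4 : Xc (m+1) (0+4) = Xc m 3 + Xc m 5 := by simpa using Xc_succ_succ m 3
        have e2 : Xc (m+1) (0+2) = Xc m 1 + Xc m 3 := by simpa using Xc_succ_succ m 1
        have w4 : wq (m+1) (0+4) = wq m 3 + wq m 5 := by simpa using wP m 3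
        have w0 : wq (m+1) 0 = 2 * wq m 1 := wB m
        rw [e4, e2, w4, w0]
        linear_combination bi + ki 1
      | succ b =>
        simp only [show b+1+4 = (b+4)+1 from by omega, show b+1+2 = (b+2)+1 from by omega]
        rw [Xc_succ_succ m b, Xc_succ_succ m (b+4), Xc_succ_succ m (b+2), wP m b, wP m (b+4)]
        simp only [show b+4+2 = b+6 from by omega, show b+2+2 = b+4 from by omega]
        linear_combination ki b + ki (b+2)
    refine ⟨ksucc, ?_⟩
    have e3 : Xc (m+1) 3 = Xc m 2 + Xc m 4 := by simpa using Xc_succ_succ m 2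
    have e1 : Xc (m+1) 1 = Xc m 0 + Xc m 2 := by simpa using Xc_succ_succ m 0
    have w3 : wq (m+1) 3 = wq m 2 + wq m 4 := by simpa using wP m 2
    have w1 : wq (m+1) 1 = wq m 0 + wq m 2 := by simpa using wP m 0
    have hx4 : Xc (m+1+1) 0 = 4 * Xc m 0 := X4 m
    rw [e3, e1, w3, w1, hx4]
    linear_combination ki 0

lemma P1 (m : ℕ) : ∀ a, (Nd m a : ℚ) + wq m (a+2) = wq m a := by
  induction m with
  | zero =>
    intro a
    rw [Nd_zero]
    rcases Nat.eq_zero_or_pos a with h | h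
    · subst h
      have w2 : wq 0 2 = 0 := by unfold wq; rw [if_neg (by omega)]
      have w0 : wq 0 0 = 1 := by unfold wq; rw [if_pos (by omega)]; simp
      rw [w2, w0]; simp
    · have w2 : wq 0 (a+2) = 0 := by unfold wq; rw [if_neg (by omega)]
      have w0 : wq 0 a = 0 := by unfold wq; rw [if_neg (by omega)]
      rw [w2, w0, if_neg (by omega)]; simp
  | succ m ih =>
    intro a
    cases a with
    | zero =>
      rw [Nd_succ_zero]
      have w2 : wq (m+1) (0+2) = wq m 1 + wq m 3 := by simpa using wP m 1
      have w0 : wq (m+1) 0 = 2 * wq m 1 := wB m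
      rw [w2, w0]
      linear_combination ih 1
    | succ a =>
      rw [Nd_succ_succ]
      push_cast
      simp only [show a+1+2 = (a+2)+1 from by omega]
      rw [wP m a, wP m (a+2)]
      simp only [show a+2+2 = a+4 from by omega]
      linear_combination ih (a+2) + ih a

lemma P2 (m : ℕ) : ∀ a, 2 * (Bd m a : ℚ) = ((a:ℚ)+1) * (((a:ℚ)+2) * Xc m a - (a:ℚ) * Xc m (a+2)) := by
  induction m with
  | zero =>
    intro a
    rw [Bd_zero]
    rcases Nat.eq_zero_or_pos a with h | h
    · subst h
      have x0 : Xc 0 0 = 1 := by simp [Xc]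
      have x2 : Xc 0 2 = 0 := by simp [Xc]
      rw [x0, x2]; simp
    · have x0 : Xc 0 a = 0 := by unfold Xc; rw [if_neg (by omega)]
      have x2 : Xc 0 (a+2) = 0 := by unfold Xc; rw [if_neg (by omega)]
      rw [x0, x2, if_neg (by omega)]; push_cast; ring
  | succ m ih =>
    intro a
    obtain ⟨ki, bi⟩ := KIBI m
    cases a with
    | zero =>
      rw [Bd_succ_zero]
      push_cast
      have hx2 : Xc (m+1) (0+2) = Xc m 1 + Xc m 3 := by simpa using Xc_succ_succ m 1
      have h1 := ih 1
      have q1 := P1 m 1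
      simp only [Nat.reduceAdd] at h1 q1
      push_cast at h1 q1
      rw [hx2]
      linear_combination 2 * q1 + h1 - 2 * bi
    | succ a =>
      have h2 := ih (a+2)
      have h0 := ih a
      have q2 := P1 m (a+2)
      have q0 := P1 m a
      have k0 := ki a
      simp only [show a+2+2 = a+4 from by omega] at h2 q2
      push_cast at h2 h0 q2 q0
      rw [Bd_succ_succ]
      push_cast
      simp only [show a+1+2 = (a+2)+1 from by omega]
      rw [Xc_succ_succ m a, Xc_succ_succ m (a+2)]
      simp only [show a+2+2 = a+4 from by omega]
      linear_combination h2 + h0 + (2*((a:ℚ)+2)) * q2 + (2*((a:ℚ)+2)) * q0 - 2*((a:ℚ)+2) * k0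

lemma sum_range_ite_lt (M t : ℕ) : (∑ p ∈ range M, if t < p then 1 else 0) = M - (t+1) := by
  induction M with
  | zero => simp
  | succ M ih =>
    rw [Finset.sum_range_succ, ih]
    by_cases h : t < M
    · rw [if_pos h]; omega
    · rw [if_neg h]; omega

lemma gauss_sum (M : ℕ) : 2 * (∑ i ∈ range M, (i+1)) = M * (M+1) := by
  induction M with
  | zero => simp
  | succ M ih =>
    rw [Finset.sum_range_succ, Nat.mul_add, ih]
    ring

lemma upc_add_dnc {m : ℕ} (w : Fin m → Bool) : upc w m + dnc w m = m := by
  unfold upc dnc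
  rw [Finset.card_filter, Finset.card_filter, ← Finset.sum_add_distrib]
  have h : ∀ t : Fin m, ((if (t:ℕ) < m ∧ w t = true then 1 else 0) +
      (if (t:ℕ) < m ∧ w t = false then 1 else 0)) = 1 := by
    intro t
    have ht := t.isLt
    cases hwt : w t <;> simp [ht, hwt]
  rw [Finset.sum_congr rfl (fun t _ => h t)]
  simp

lemma card_true_eq_upc {m : ℕ} (w : Fin m → Bool) :
    (univ.filter fun t : Fin m => w t = true).card = upc w m := by
  unfold upc
  congr 1
  apply Finset.filter_congr
  intro t _
  simp [t.isLt]

lemma card_false_eq_dnc {m : ℕ} (w : Fin m → Bool) :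
    (univ.filter fun t : Fin m => w t = false).card = dnc w m := by
  unfold dnc
  congr 1
  apply Finset.filter_congr
  intro t _
  simp [t.isLt]

lemma sum_upc {m : ℕ} (w : Fin m → Bool) :
    ∑ p ∈ range (m+1), upc w p
      = ∑ t ∈ univ.filter (fun t : Fin m => w t = true), (m - (t:ℕ)) := by
  unfold upc
  simp_rw [Finset.card_filter]
  rw [Finset.sum_comm, Finset.sum_filter]
  apply Finset.sum_congr rfl
  intro t _
  by_cases h : w t = true
  · simp only [h, eq_self_iff_true, and_true, if_true]
    rw [sum_range_ite_lt]
    omega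
  · simp [h]

lemma sum_dnc {m : ℕ} (w : Fin m → Bool) :
    ∑ p ∈ range (m+1), dnc w p
      = ∑ t ∈ univ.filter (fun t : Fin m => w t = false), (m - (t:ℕ)) := by
  unfold dnc
  simp_rw [Finset.card_filter]
  rw [Finset.sum_comm, Finset.sum_filter]
  apply Finset.sum_congr rfl
  intro t _
  by_cases h : w t = false
  · simp only [h, eq_self_iff_true, and_true, if_true]
    rw [sum_range_ite_lt]
    omega
  · simp [h]

lemma path_identity {n : ℕ} (w : Fin (2*n) → Bool) (hw : Ok 0 w) :
    2 * (∑ t ∈ univ.filter (fun t : Fin (2*n) => w t = true), ((t:ℕ)+1)) + st 0 w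
      = (n+1)*(2*n+1) := by
  have hud : upc w (2*n) + dnc w (2*n) = 2*n := upc_add_dnc w
  have hw2 := hw.2
  have hu : upc w (2*n) = n := by omega
  have hd : dnc w (2*n) = n := by omega
  -- sum of upc
  have hU : (∑ p ∈ range (2*n+1), upc w p)
      + (∑ t ∈ univ.filter (fun t : Fin (2*n) => w t = true), ((t:ℕ)+1)) = n * (2*n+1) := by
    rw [sum_upc, ← Finset.sum_add_distrib]
    have : ∀ t ∈ univ.filter (fun t : Fin (2*n) => w t = true), (2*n - (t:ℕ)) + ((t:ℕ)+1) = 2*n+1 := by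
      intro t _
      have := t.isLt
      omega
    rw [Finset.sum_congr rfl this, Finset.sum_const, smul_eq_mul, card_true_eq_upc, hu]
  have hD : (∑ p ∈ range (2*n+1), dnc w p)
      + (∑ t ∈ univ.filter (fun t : Fin (2*n) => w t = false), ((t:ℕ)+1)) = n * (2*n+1) := by
    rw [sum_dnc, ← Finset.sum_add_distrib]
    have : ∀ t ∈ univ.filter (fun t : Fin (2*n) => w t = false), (2*n - (t:ℕ)) + ((t:ℕ)+1) = 2*n+1 := by
      intro t _
      have := t.isLt
      omega
    rw [Finset.sum_congr rfl this, Finset.sum_const, smul_eq_mul, card_false_eq_dnc, hd]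
  have hGD : (∑ t ∈ univ.filter (fun t : Fin (2*n) => w t = true), ((t:ℕ)+1))
      + (∑ t ∈ univ.filter (fun t : Fin (2*n) => w t = false), ((t:ℕ)+1))
      = ∑ t : Fin (2*n), ((t:ℕ)+1) := by
    have := Finset.sum_filter_add_sum_filter_not (univ : Finset (Fin (2*n)))
      (fun t => w t = true) (fun t : Fin (2*n) => (t:ℕ)+1)
    rw [← this]
    congr 1
    apply Finset.sum_congr _ (fun t _ => rfl)
    apply Finset.filter_congr
    intro t _
    simp
  have hAll : 2 * (∑ t : Fin (2*n), ((t:ℕ)+1)) = 2*n * (2*n+1) := by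
    rw [Fin.sum_univ_eq_sum_range (fun i => i+1) (2*n)]
    exact gauss_sum (2*n)
  have hst : st 0 w + (∑ p ∈ range (2*n+1), dnc w p)
      = (2*n+1) + (∑ p ∈ range (2*n+1), upc w p) := by
    unfold st
    rw [← Finset.sum_add_distrib]
    have : ∀ p ∈ range (2*n+1), (0 + upc w p + 1 - dnc w p) + dnc w p = upc w p + 1 := by
      intro p hp
      rw [Finset.mem_range] at hp
      have := hw.1 p (by omega)
      omega
    rw [Finset.sum_congr rfl this, Finset.sum_add_distrib, Finset.sum_const, Finset.card_range,
      smul_eq_mul, mul_one]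
    omega
  set P := n*(2*n+1) with hP
  have hAll2 : 2 * (∑ t : Fin (2*n), ((t:ℕ)+1)) = 2*P := by rw [hAll, hP]; ring
  have key : (n+1)*(2*n+1) = P + (2*n+1) := by rw [hP]; ring
  rw [key]
  omega

lemma isDyck_iff {m : ℕ} (w : Fin m → Bool) : IsDyck w ↔ Ok 0 w := by
  unfold IsDyck Ok
  rw [card_true_eq_upc, card_false_eq_dnc]
  constructor
  · rintro ⟨h1, h2⟩
    exact ⟨fun p hp => by rw [Nat.zero_add]; exact h1 p hp, by omega⟩
  · rintro ⟨h1, h2⟩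
    refine ⟨fun p hp => ?_, by omega⟩
    have h := h1 p hp
    rw [Nat.zero_add] at h
    exact h

lemma gPos_link (n : ℕ) :
    2 * gPos n + Bd (2*n) 0 = (n+1) * (2*n+1) * Nd (2*n) 0 := by
  unfold gPos Bd Nd
  have hset : (univ.filter fun w : Fin (2*n) → Bool => IsDyck w)
      = ((univ : Finset (Fin (2*n) → Bool)).filter (Ok 0)) := by
    apply Finset.filter_congr
    intro w _
    simp [isDyck_iff]
  rw [hset, Finset.mul_sum, ← Finset.sum_add_distrib]
  have : ∀ w ∈ ((univ : Finset (Fin (2*n) → Bool)).filter (Ok 0)),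
      2 * (∑ t ∈ univ.filter (fun t : Fin (2*n) => w t = true), ((t:ℕ)+1)) + st 0 w
        = (n+1)*(2*n+1) := by
    intro w hw
    rw [Finset.mem_filter] at hw
    exact path_identity w hw.2
  rw [Finset.sum_congr rfl this, Finset.sum_const, smul_eq_mul]
  ring

lemma Bd_val (n : ℕ) : (Bd (2*n) 0 : ℚ) = 4^n := by
  have h := P2 (2*n) 0
  push_cast at h
  rw [Xc_zero_left, if_pos (by omega : 2*n % 2 = 0)] at h
  have h2 : ((2:ℚ))^(2*n) = 4^n := by
    rw [pow_mul]
    norm_num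
  rw [h2] at h
  linarith

lemma Nd_val (n : ℕ) : ((n:ℚ)+1) * (Nd (2*n) 0 : ℚ) = (Nat.centralBinom n : ℚ) := by
  have h := P1 (2*n) 0
  have hw0 : wq (2*n) 0 = ((2*n).choose n : ℚ) := by
    unfold wq
    rw [if_pos (by omega)]
    congr 2
    omega
  rcases Nat.eq_zero_or_pos n with hn | hn
  · subst hn
    have : Nd 0 0 = 1 := by rw [Nd_zero]; simp
    rw [this]
    simp [Nat.centralBinom]
  · have hw2 : wq (2*n) 2 = ((2*n).choose (n-1) : ℚ) := by
      unfold wq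
      rw [if_pos (by omega)]
      congr 2
      omega
    have hsym : ((2*n).choose (n-1) : ℚ) = ((2*n).choose (n+1) : ℚ) := by
      have := Nat.choose_symm (n := 2*n) (k := n+1) (by omega)
      rw [show 2*n - (n+1) = n-1 by omega] at this
      exact_mod_cast congrArg (fun x : ℕ => (x:ℚ)) this
    have hre : (2*n).choose (n+1) * (n+1) = (2*n).choose n * n := by
      have := Nat.choose_succ_right_eq (2*n) n
      rw [show 2*n - n = n by omega] at this
      exact this
    have hreq : ((2*n).choose (n+1) : ℚ) * ((n:ℚ)+1) = ((2*n).choose n : ℚ) * (n:ℚ) := by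
      exact_mod_cast congrArg (fun x : ℕ => (x:ℚ)) hre
    have hcb : (Nat.centralBinom n : ℚ) = ((2*n).choose n : ℚ) := by
      simp [Nat.centralBinom]
    rw [hw0, hw2] at h
    linear_combination ((n:ℚ)+1) * h - ((n:ℚ)+1) * hsym - hreq - hcb

lemma CF (n : ℕ) : 2 * (gPos n : ℚ) = (2*(n:ℚ)+1) * (Nat.centralBinom n : ℚ) - 4^n := by
  have h := gPos_link n
  have hq : 2*(gPos n : ℚ) + (Bd (2*n) 0 : ℚ)
      = ((n:ℚ)+1)*(2*(n:ℚ)+1)*(Nd (2*n) 0 : ℚ) := by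
    exact_mod_cast h
  linear_combination hq + (2*(n:ℚ)+1) * (Nd_val n) - (Bd_val n)

lemma Ecoeff (E : PowerSeries ℚ) (hE0 : constantCoeff E = 0) (hE : E = X * (1 + E^2)) :
    ∀ n, coeff n E = if n % 2 = 1 then (catalan (n/2) : ℚ) else 0 := by
  intro n
  induction n using Nat.strong_induction_on with
  | _ n ih =>
    cases n with
    | zero =>
      rw [if_neg (by omega)]
      simpa using hE0
    | succ k =>
      have h1 : coeff (k+1) E = coeff k (1 + E^2) := by
        conv_lhs => rw [hE]
        rw [PowerSeries.coeff_succ_X_mul]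
      rw [h1, map_add, PowerSeries.coeff_one, sq, PowerSeries.coeff_mul,
        Finset.Nat.sum_antidiagonal_eq_sum_range_succ_mk]
      by_cases hk : k % 2 = 1
      · rw [if_neg (by omega : ¬ (k = 0)), if_neg (by omega : ¬ ((k+1) % 2 = 1))]
        have hz : ∀ i ∈ range (k+1), coeff i E * coeff (k-i) E = 0 := by
          intro i hi
          rw [Finset.mem_range] at hi
          by_cases hio : i % 2 = 1
          · rw [ih (k-i) (by omega), if_neg (by omega), mul_zero]
          · rw [ih i (by omega), if_neg hio, zero_mul]
        rw [Finset.sum_eq_zero hz]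
        simp
      · rcases Nat.eq_zero_or_pos k with hk0 | hkpos
        · subst hk0
          simp [hE0]
        · obtain ⟨t, rfl⟩ : ∃ t, k = 2*t := ⟨k/2, by omega⟩
          have ht : 1 ≤ t := by omega
          rw [if_neg (by omega : ¬ (2*t = 0)), zero_add,
            if_pos (by omega : (2*t+1) % 2 = 1)]
          have hfil : ∑ i ∈ (range (2*t+1)).filter (fun i => i % 2 = 1),
              coeff i E * coeff (2*t-i) E
              = ∑ i ∈ range (2*t+1), coeff i E * coeff (2*t-i) E := by
            apply Finset.sum_filter_of_ne
            intro i hi hne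
            rw [Finset.mem_range] at hi
            by_contra hio
            apply hne
            rw [ih i (by omega), if_neg hio, zero_mul]
          rw [← hfil]
          have himg : (range (2*t+1)).filter (fun i => i % 2 = 1)
              = (range t).image (fun j => 2*j+1) := by
            ext i
            simp only [Finset.mem_filter, Finset.mem_range, Finset.mem_image]
            constructor
            · rintro ⟨h1, h2⟩
              exact ⟨i/2, by omega, by omega⟩
            · rintro ⟨j, hj, rfl⟩
              omega
          rw [himg, Finset.sum_image (by intro x _ y _ h; simp only at h; omega)]
          have hterm : ∀ j ∈ range t, coeff (2*j+1) E * coeff (2*t-(2*j+1)) E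
              = (catalan j : ℚ) * (catalan (t-1-j) : ℚ) := by
            intro j hj
            rw [Finset.mem_range] at hj
            rw [ih (2*j+1) (by omega), if_pos (by omega),
              ih (2*t-(2*j+1)) (by omega), if_pos (by omega),
              show (2*j+1)/2 = j from by omega,
              show (2*t-(2*j+1))/2 = t-1-j from by omega]
          rw [Finset.sum_congr rfl hterm]
          have hcat : catalan t = ∑ j ∈ range t, catalan j * catalan (t-1-j) := by
            have h := catalan_succ' (t-1)
            rw [Finset.Nat.sum_antidiagonal_eq_sum_range_succ_mk] at h
            simp only [Nat.succ_eq_add_one, show t-1+1 = t from by omega] at h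
            exact h
          rw [show (2*t+1)/2 = t from by omega, hcat]
          push_cast
          rfl

lemma gPos_zero : gPos 0 = 0 := by
  unfold gPos
  apply Finset.sum_eq_zero
  intro w _
  apply Finset.sum_eq_zero
  intro t _
  exact absurd t.2 (by omega)

lemma gPv1 : (gPos 1 : ℚ) = 1 := by
  have h := CF 1
  have : Nat.centralBinom 1 = 2 := by decide
  rw [this] at h
  push_cast at h
  linarith

lemma gPv2 : (gPos 2 : ℚ) = 7 := by
  have h := CF 2
  have : Nat.centralBinom 2 = 6 := by decide
  rw [this] at h
  push_cast at h
  linarith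

lemma gPv3 : (gPos 3 : ℚ) = 38 := by
  have h := CF 3
  have : Nat.centralBinom 3 = 20 := by decide
  rw [this] at h
  push_cast at h
  linarith

lemma REC (m : ℕ) : (gPos (m+2) : ℚ) = 8 * gPos (m+1) - 16 * gPos m - catalan (m+1) := by
  have c2 := CF (m+2)
  have c1 := CF (m+1)
  have c0 := CF m
  have r1 : ((m:ℚ)+2) * (Nat.centralBinom (m+2) : ℚ)
      = 2*(2*((m:ℚ)+1)+1) * (Nat.centralBinom (m+1) : ℚ) := by
    exact_mod_cast congrArg (fun x : ℕ => (x:ℚ)) (Nat.succ_mul_centralBinom_succ (m+1))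
  have r0 : ((m:ℚ)+1) * (Nat.centralBinom (m+1) : ℚ)
      = 2*(2*(m:ℚ)+1) * (Nat.centralBinom m : ℚ) := by
    exact_mod_cast congrArg (fun x : ℕ => (x:ℚ)) (Nat.succ_mul_centralBinom_succ m)
  have rc : ((m:ℚ)+2) * (catalan (m+1) : ℚ) = (Nat.centralBinom (m+1) : ℚ) := by
    exact_mod_cast congrArg (fun x : ℕ => (x:ℚ)) (succ_mul_catalan_eq_centralBinom (m+1))
  have hne : ((m:ℚ)+2) ≠ 0 := by positivity
  apply mul_left_cancel₀ hne
  push_cast at c2 c1 c0 ⊢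
  linear_combination ((m:ℚ)+2)/2*c2 - 4*((m:ℚ)+2)*c1 + 8*((m:ℚ)+2)*c0
    + (2*(m:ℚ)+5)/2*r1 - 4*((m:ℚ)+2)*r0 + rc

lemma keyK (E : PowerSeries ℚ) (hE0 : constantCoeff E = 0) (hE : E = X * (1 + E^2)) :
    (PowerSeries.mk fun m => if m % 2 = 0 then (gPos (m / 2) : ℚ) else 0) * (1 - 4*X^2)^2
      = 2*X^2 - X*E := by
  set G : PowerSeries ℚ := PowerSeries.mk fun m => if m % 2 = 0 then (gPos (m / 2) : ℚ) else 0
    with hG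
  have h8 : C 8 = (8 : PowerSeries ℚ) := map_ofNat _ 8
  have h16 : C 16 = (16 : PowerSeries ℚ) := map_ofNat _ 16
  have h2 : C 2 = (2 : PowerSeries ℚ) := map_ofNat _ 2
  have hexp : G * (1 - 4*X^2)^2 = G - (C 8)*(G*X^2) + (C 16)*(G*X^4) := by
    rw [h8, h16]; ring
  have hrhs : (2*X^2 - X*E : PowerSeries ℚ) = (C 2)*X^2 - X*E := by rw [h2]
  rw [hexp, hrhs]
  ext n
  rw [map_add, map_sub, map_sub, PowerSeries.coeff_C_mul, PowerSeries.coeff_C_mul,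
    PowerSeries.coeff_C_mul, PowerSeries.coeff_mul_X_pow', PowerSeries.coeff_mul_X_pow',
    PowerSeries.coeff_X_pow]
  have hEc := Ecoeff E hE0 hE
  have hGc : ∀ k, coeff k G = if k % 2 = 0 then (gPos (k / 2) : ℚ) else 0 := by
    intro k
    rw [hG, PowerSeries.coeff_mk]
  simp only [hGc]
  cases n with
  | zero =>
    have hXE : coeff 0 (X*E) = 0 := by simp
    rw [hXE]
    norm_num [gPos_zero]
  | succ m =>
    rw [PowerSeries.coeff_succ_X_mul, hEc m]
    by_cases hm : (m+1) % 2 = 0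
    · obtain ⟨s, rfl⟩ : ∃ s, m = 2*s+1 := ⟨(m-1)/2, by omega⟩
      rcases Nat.eq_zero_or_pos s with hs | hs
      · subst hs
        norm_num [gPos_zero, gPv1, catalan_zero]
      · obtain ⟨r, rfl⟩ : ∃ r, s = r+1 := ⟨s-1, by omega⟩
        simp only [show 2*(r+1)+1+1 = 2*r+4 from by omega, show 2*(r+1)+1 = 2*r+3 from by omega]
        rw [if_pos (by omega : (2*r+4) % 2 = 0), show (2*r+4)/2 = r+2 from by omega,
          if_pos (by omega : 2 ≤ 2*r+4), if_pos (by omega : (2*r+4-2) % 2 = 0),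
          show (2*r+4-2)/2 = r+1 from by omega,
          if_pos (by omega : 4 ≤ 2*r+4), if_pos (by omega : (2*r+4-4) % 2 = 0),
          show (2*r+4-4)/2 = r from by omega,
          if_neg (by omega : ¬ (2*r+4 = 2)),
          if_pos (by omega : (2*r+3) % 2 = 1), show (2*r+3)/2 = r+1 from by omega]
        have hrec := REC r
        rw [show r+2 = r+1+1 from rfl]
        linear_combination hrec
    · rw [if_neg hm, if_neg (by omega : ¬ (m % 2 = 1))]
      rw [if_neg (by omega : ¬ (m+1 = 2))]
      have e2 : (if 2 ≤ m+1 then (if (m+1-2) % 2 = 0 then (gPos ((m+1-2)/2) : ℚ) else 0) else 0) = 0 := by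
        by_cases h : 2 ≤ m+1
        · rw [if_pos h, if_neg (by omega)]
        · rw [if_neg h]
      have e4 : (if 4 ≤ m+1 then (if (m+1-4) % 2 = 0 then (gPos ((m+1-4)/2) : ℚ) else 0) else 0) = 0 := by
        by_cases h : 4 ≤ m+1
        · rw [if_pos h, if_neg (by omega)]
        · rw [if_neg h]
      rw [e2, e4]
      ring

/-- The generating function `G(z,1) = Σ_n gPos(n) z^(2n)` of Dyck paths with a
distinguished position-weighted up-step satisfies `G(z,1) = E²(1+E²)²/(1-E²)³`,
where `E` is the unique power series with `E(0) = 0` and `E = z(1+E²)`; moreover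
`[z²]G = 1`, `[z⁴]G = 7`, `[z⁶]G = 38`. -/
theorem stmt_17 (E : PowerSeries ℚ)
    (hE0 : constantCoeff E = 0) (hE : E = X * (1 + E ^ 2)) :
    (PowerSeries.mk fun m => if m % 2 = 0 then (gPos (m / 2) : ℚ) else 0) *
        (1 - E ^ 2) ^ 3 = E ^ 2 * (1 + E ^ 2) ^ 2 ∧
    gPos 1 = 1 ∧ gPos 2 = 7 ∧ gPos 3 = 38 := by
  have hK := keyK E hE0 hE
  set G : PowerSeries ℚ := PowerSeries.mk fun m => if m % 2 = 0 then (gPos (m / 2) : ℚ) else 0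
    with hG
  refine ⟨?_, by exact_mod_cast gPv1, by exact_mod_cast gPv2, by exact_mod_cast gPv3⟩
  have hXE2 : X * E^2 = E - X := by linear_combination -hE
  set S : PowerSeries ℚ := 1 - 2*X*E with hS
  have hS2 : S^2 = 1 - 4*X^2 := by
    rw [hS]
    linear_combination 4*X*hXE2
  have hES : E * S = 2*X - E := by
    rw [hS]
    linear_combination -2*hXE2
  have hSc : constantCoeff S = 1 := by
    rw [hS]
    simp [hE0]
  have hSne : S ≠ 0 := by
    intro h
    rw [h] at hSc
    simp at hSc
  have hGS : G * S^3 = X * E := by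
    have h1 : S * (G * S^3) = S * (X*E) := by
      have e1 : S * (G * S^3) = G * (S^2)^2 := by ring
      rw [e1, hS2, hK]
      linear_combination -X*hES
    exact mul_left_cancel₀ hSne h1
  have hXne : (X : PowerSeries ℚ)^3 ≠ 0 := pow_ne_zero _ PowerSeries.X_ne_zero
  apply mul_left_cancel₀ hXne
  have step1 : X * (1 - E^2) = 2*X - E := by linear_combination -hXE2
  have h3 : X^3 * (G*(1-E^2)^3) = X*E^4 := by
    have e1 : X^3 * (G*(1-E^2)^3) = G * (X*(1-E^2))^3 := by ring
    rw [e1, step1, ← hES]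
    calc G * (E*S)^3 = E^3 * (G * S^3) := by ring
    _ = E^3 * (X*E) := by rw [hGS]
    _ = X*E^4 := by ring
  have h4 : X^3 * (E^2*(1+E^2)^2) = X*E^4 := by
    have e1 : X^3 * (E^2*(1+E^2)^2) = X*E^2*(X*(1+E^2))^2 := by ring
    rw [e1, ← hE]
    ring
  rw [h3, h4]
end
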